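/- arXiv:1106.5010 — 2 statements merged into one kernel-verified Lean document; each statement's English description precedes it below -/
import Mathlib

section
/- In a category satisfying axioms (J1)-(J4) but not necessarily the cube axiom, for any morphism p : E → B one has Wsecat(p) ≤ Gsecat(p). -/
open CategoryTheory CategoryTheory.Limits ZeroObject

universe v u v' u'

variable (C : Type u) [Category.{v} C] [HasZeroObject C] [HasZeroMorphisms C]

/-- A category satisfying axioms (J1)-(J4) of Doeraene's J-categories:
a pointed category with fibrations, cofibrations and weak equivalences. -/
structure PreJCat where
  fib : MorphismProperty C
  cofib : MorphismProperty C
  weq : MorphismProperty C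
  /-- (J1) isomorphisms are trivial cofibrations -/
  iso_triv_cofib : ∀ {X Y : C} (f : X ⟶ Y), IsIso f → cofib f ∧ weq f
  /-- (J1) isomorphisms are trivial fibrations -/
  iso_triv_fib : ∀ {X Y : C} (f : X ⟶ Y), IsIso f → fib f ∧ weq f
  fib_comp : ∀ {X Y Z : C} {f : X ⟶ Y} {g : Y ⟶ Z}, fib f → fib g → fib (f ≫ g)
  cofib_comp : ∀ {X Y Z : C} {f : X ⟶ Y} {g : Y ⟶ Z}, cofib f → cofib g → cofib (f ≫ g)
  /-- (J1) two-out-of-three for weak equivalences -/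
  weq_comp : ∀ {X Y Z : C} {f : X ⟶ Y} {g : Y ⟶ Z}, weq f → weq g → weq (f ≫ g)
  weq_of_comp_left : ∀ {X Y Z : C} {f : X ⟶ Y} {g : Y ⟶ Z}, weq g → weq (f ≫ g) → weq f
  weq_of_comp_right : ∀ {X Y Z : C} {f : X ⟶ Y} {g : Y ⟶ Z}, weq f → weq (f ≫ g) → weq g
  /-- (J2) pullbacks of fibrations exist, and the base extension is a fibration -/
  pb_exists : ∀ {E B B' : C} (p : E ⟶ B) (f : B' ⟶ B), fib p →
    ∃ (P : C) (fb : P ⟶ E) (pb : P ⟶ B'), IsPullback fb pb p f ∧ fib pb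
  /-- (J2) base extensions of weak equivalences along fibrations are weak equivalences -/
  pb_weq : ∀ {E B B' P : C} {p : E ⟶ B} {f : B' ⟶ B} {fb : P ⟶ E} {pb : P ⟶ B'},
    fib p → IsPullback fb pb p f → (weq f → weq fb) ∧ (weq p → weq pb)
  /-- (J2) dual: pushouts of cofibrations exist -/
  po_exists : ∀ {A X Y : C} (i : A ⟶ X) (g : A ⟶ Y), cofib i →
    ∃ (Q : C) (inl : X ⟶ Q) (inr : Y ⟶ Q), IsPushout i g inl inr ∧ cofib inr
  po_weq : ∀ {A X Y Q : C} {i : A ⟶ X} {g : A ⟶ Y} {inl : X ⟶ Q} {inr : Y ⟶ Q},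
    cofib i → IsPushout i g inl inr → (weq g → weq inl) ∧ (weq i → weq inr)
  /-- (J3) F-factorizations exist -/
  F_fac : ∀ {X Y : C} (f : X ⟶ Y), ∃ (Z : C) (τ : X ⟶ Z) (q : Z ⟶ Y),
    weq τ ∧ fib q ∧ τ ≫ q = f
  /-- (J3) C-factorizations exist -/
  C_fac : ∀ {X Y : C} (f : X ⟶ Y), ∃ (Z : C) (i : X ⟶ Z) (σ : Z ⟶ Y),
    cofib i ∧ weq σ ∧ i ≫ σ = f
  /-- (J4) cofibrant replacements exist -/
  cof_replace : ∀ X : C, ∃ (Xb : C) (q : Xb ⟶ X), fib q ∧ weq q ∧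
    (∀ {E : C} (p : E ⟶ Xb), fib p → weq p → ∃ s : Xb ⟶ E, s ≫ p = 𝟙 Xb)

variable {C}

namespace PreJCat

/-- An object is a cofibrant model if every trivial fibration onto it admits a section. -/
def CofModel (P : PreJCat C) (X : C) : Prop :=
  ∀ {E : C} (p : E ⟶ X), P.fib p → P.weq p → ∃ s : X ⟶ E, s ≫ p = 𝟙 X

/-- An object is e-fibrant if the morphism to the zero object is a fibration. -/
def EFibrant (P : PreJCat C) (X : C) : Prop := P.fib (0 : X ⟶ 0)

/-- `f` admits a weak lifting along `g` (all objects being cofibrant models). -/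
def WeakLifting (P : PreJCat C) {A B Cc : C} (f : A ⟶ B) (g : Cc ⟶ B) : Prop :=
  ∃ (E : C) (τ : Cc ⟶ E) (q : E ⟶ B), P.weq τ ∧ P.fib q ∧ τ ≫ q = g ∧
    ∃ s : A ⟶ E, s ≫ q = f

/-- `g` admits a weak section. -/
def HasWeakSection (P : PreJCat C) {E B : C} (g : E ⟶ B) : Prop :=
  P.WeakLifting (𝟙 B) g

/-- `j : J ⟶ B` is a join morphism of `f : A ⟶ B` and `g : Cc ⟶ B`: built from an
F-factorization of `g`, a pullback, a C-factorization and a pushout. -/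
def IsJoin (P : PreJCat C) {A Cc B J : C} (f : A ⟶ B) (g : Cc ⟶ B) (j : J ⟶ B) : Prop :=
  ∃ (E : C) (τ : Cc ⟶ E) (q : E ⟶ B), P.weq τ ∧ P.fib q ∧ τ ≫ q = g ∧
  ∃ (E' Z : C) (fbar : E' ⟶ E) (pbar : E' ⟶ A) (i : E' ⟶ Z) (σ : Z ⟶ E)
    (a : A ⟶ J) (bz : Z ⟶ J),
    IsPullback fbar pbar q f ∧ P.cofib i ∧ P.weq σ ∧ i ≫ σ = fbar ∧
    IsPushout pbar i a bz ∧ a ≫ j = f ∧ bz ≫ j = σ ≫ q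

/-- `IsIterJoin P p n h` : `h` is an `n`-th iterated join morphism `*ⁿ_B E ⟶ B` of `p`. -/
inductive IsIterJoin (P : PreJCat C) {E B : C} (p : E ⟶ B) : ℕ → ∀ {X : C}, (X ⟶ B) → Prop
  | zero : IsIterJoin P p 0 p
  | succ {n : ℕ} {X Y : C} {h : X ⟶ B} {h' : Y ⟶ B} :
      IsIterJoin P p n h → P.IsJoin h p h' → IsIterJoin P p (n + 1) h'

/-- The Ganea-type sectional category of a morphism. -/
noncomputable def Gsecat (P : PreJCat C) {E B : C} (p : E ⟶ B) : ℕ∞ :=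
  sInf {n : ℕ∞ | ∃ m : ℕ, n = (m : ℕ∞) ∧
    ∃ (X : C) (h : X ⟶ B), P.IsIterJoin p m h ∧ P.HasWeakSection h}

end PreJCat

/-- `p1, p2` exhibit `Pd` as a binary product of `X` and `Y`. -/
def IsBinProd {X Y Pd : C} (p1 : Pd ⟶ X) (p2 : Pd ⟶ Y) : Prop :=
  Nonempty (IsLimit (BinaryFan.mk p1 p2))

namespace PreJCat

/-- `IsFatWedge P p n j Δ` : `j : Tⁿ(p) ⟶ B^{n+1}` is an `n`-th fat wedge morphism of `p`
together with the diagonal `Δ : B ⟶ B^{n+1}`. -/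
inductive IsFatWedge (P : PreJCat C) {E B : C} (p : E ⟶ B) :
    ℕ → ∀ {T Pw : C}, (T ⟶ Pw) → (B ⟶ Pw) → Prop
  | zero : IsFatWedge P p 0 p (𝟙 B)
  | succ {n : ℕ} {T Pn : C} {j : T ⟶ Pn} {Δ : B ⟶ Pn}
      (hprev : IsFatWedge P p n j Δ)
      {Pn1 : C} {pr1 : Pn1 ⟶ Pn} {pr2 : Pn1 ⟶ B} (hP : IsBinProd pr1 pr2)
      {TB : C} {q1 : TB ⟶ T} {q2 : TB ⟶ B} (hTB : IsBinProd q1 q2)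
      {PE : C} {r1 : PE ⟶ Pn} {r2 : PE ⟶ E} (hPE : IsBinProd r1 r2)
      {jB : TB ⟶ Pn1} (hjB : jB ≫ pr1 = q1 ≫ j ∧ jB ≫ pr2 = q2)
      {pP : PE ⟶ Pn1} (hpP : pP ≫ pr1 = r1 ∧ pP ≫ pr2 = r2 ≫ p)
      {Tn1 : C} {j' : Tn1 ⟶ Pn1} (hjoin : P.IsJoin jB pP j')
      {Δ' : B ⟶ Pn1} (hΔ : Δ' ≫ pr1 = Δ ∧ Δ' ≫ pr2 = 𝟙 B) :
      IsFatWedge P p (n + 1) j' Δ'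

/-- The Whitehead-type sectional category of a morphism with e-fibrant codomain. -/
noncomputable def WsecatE (P : PreJCat C) {E B : C} (p : E ⟶ B) : ℕ∞ :=
  sInf {n : ℕ∞ | ∃ m : ℕ, n = (m : ℕ∞) ∧
    ∃ (T Pw : C) (j : T ⟶ Pw) (Δ : B ⟶ Pw), P.IsFatWedge p m j Δ ∧ P.WeakLifting Δ j}

/-- The Whitehead-type sectional category of an arbitrary morphism, via e-fibrant
replacements of the codomain. -/
noncomputable def Wsecat (P : PreJCat C) {E B : C} (p : E ⟶ B) : ℕ∞ :=
  ⨅ (F : C) (τ : B ⟶ F) (_ : P.weq τ ∧ P.EFibrant F), P.WsecatE (p ≫ τ)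

/-- A commutative square is a homotopy pullback. -/
def IsHPB (P : PreJCat C) {D A Cc B : C} (f' : D ⟶ Cc) (g' : D ⟶ A)
    (g : Cc ⟶ B) (f : A ⟶ B) : Prop :=
  f' ≫ g = g' ≫ f ∧ ∃ (E : C) (τ : Cc ⟶ E) (q : E ⟶ B), P.weq τ ∧ P.fib q ∧ τ ≫ q = g ∧
    ∃ (Pt : C) (pr1 : Pt ⟶ E) (pr2 : Pt ⟶ A), IsPullback pr1 pr2 q f ∧
      ∃ w : D ⟶ Pt, P.weq w ∧ w ≫ pr1 = f' ≫ τ ∧ w ≫ pr2 = g'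

/-- A commutative square is a homotopy pushout. -/
def IsHPO (P : PreJCat C) {A B Cc D : C} (f : A ⟶ B) (g : A ⟶ Cc)
    (i' : B ⟶ D) (j' : Cc ⟶ D) : Prop :=
  f ≫ i' = g ≫ j' ∧ ∃ (Z : C) (i : A ⟶ Z) (σ : Z ⟶ B), P.cofib i ∧ P.weq σ ∧ i ≫ σ = f ∧
    ∃ (Q : C) (inl : Z ⟶ Q) (inr : Cc ⟶ Q), IsPushout i g inl inr ∧
      ∃ w : Q ⟶ D, P.weq w ∧ inl ≫ w = σ ≫ i' ∧ inr ≫ w = j'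

/-- `A-A'-B'-B` is a weak pullback over `b : B ⟶ B'` (all objects cofibrant models). -/
def IsWeakPullback (P : PreJCat C) {A B A' B' : C}
    (f : A ⟶ B) (f' : A' ⟶ B') (b : B ⟶ B') : Prop :=
  ∃ (X : C) (τ : A' ⟶ X) (q : X ⟶ B'), P.weq τ ∧ P.fib q ∧ τ ≫ q = f' ∧
    ∃ x : A ⟶ X, P.IsHPB x f q b

/-- `g : G ⟶ B` is an `n`-th Ganea map of `B`: the `n`-th iterated join of `0 ⟶ B`. -/
def IsGaneaMap (P : PreJCat C) (B : C) (n : ℕ) {G : C} (g : G ⟶ B) : Prop :=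
  P.IsIterJoin (0 : (0 : C) ⟶ B) n g

/-- The Lusternik-Schnirelmann category of an object. -/
noncomputable def catObj (P : PreJCat C) (B : C) : ℕ∞ :=
  sInf {n : ℕ∞ | ∃ m : ℕ, n = (m : ℕ∞) ∧
    ∃ (G : C) (g : G ⟶ B), P.IsGaneaMap B m g ∧ P.HasWeakSection g}

/-- The Lusternik-Schnirelmann category of a morphism `b : B ⟶ B'`:
least `n` such that `b` admits a weak lifting along the `n`-th Ganea map of `B'`. -/
noncomputable def catMor (P : PreJCat C) {B B' : C} (b : B ⟶ B') : ℕ∞ :=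
  sInf {n : ℕ∞ | ∃ m : ℕ, n = (m : ℕ∞) ∧
    ∃ (G : C) (g : G ⟶ B'), P.IsGaneaMap B' m g ∧ P.WeakLifting b g}

/-- One step of a zigzag: a weak equivalence of morphisms in the arrow category. -/
def MorWeqStep (P : PreJCat C) (u v : Arrow C) : Prop :=
  ∃ h : u ⟶ v, P.weq h.left ∧ P.weq h.right

/-- Two morphisms are weakly equivalent: joined by a finite zigzag of weak
equivalences of morphisms. -/
def WeaklyEquivMor (P : PreJCat C) (u v : Arrow C) : Prop :=
  Relation.EqvGen P.MorWeqStep u v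

def ObjWeqStep (P : PreJCat C) (X Y : C) : Prop := ∃ f : X ⟶ Y, P.weq f

/-- Two objects are weakly equivalent: joined by a finite zigzag of weak equivalences. -/
def WeaklyEquivObj (P : PreJCat C) (X Y : C) : Prop :=
  Relation.EqvGen P.ObjWeqStep X Y

/-- The abstract topological complexity of an e-fibrant object:
the sectional category of the diagonal `B ⟶ B × B`. -/
noncomputable def TCE (P : PreJCat C) (B : C) : ℕ∞ :=
  ⨅ (Pd : C) (p1 : Pd ⟶ B) (p2 : Pd ⟶ B) (_ : IsBinProd p1 p2)
    (Δ : B ⟶ Pd) (_ : Δ ≫ p1 = 𝟙 B ∧ Δ ≫ p2 = 𝟙 B), P.Gsecat Δ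

/-- The abstract topological complexity of an arbitrary object, via e-fibrant
replacements. -/
noncomputable def TC (P : PreJCat C) (B : C) : ℕ∞ :=
  ⨅ (F : C) (τ : B ⟶ F) (_ : P.weq τ ∧ P.EFibrant F), P.TCE F

end PreJCat

variable (C)

/-- A J-category: (J1)-(J4) together with the cube axiom (J5). -/
structure JCat extends PreJCat C where
  /-- (J5) the cube axiom: in a commutative cube whose bottom face is a homotopy
  pushout and whose vertical faces are homotopy pullbacks, the top face is a
  homotopy pushout. -/
  cube : ∀ {X00 X01 X10 X11 Y00 Y01 Y10 Y11 : C}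
    {tf : X00 ⟶ X01} {tg : X00 ⟶ X10} {ti : X01 ⟶ X11} {tj : X10 ⟶ X11}
    {bf : Y00 ⟶ Y01} {bg : Y00 ⟶ Y10} {bi : Y01 ⟶ Y11} {bj : Y10 ⟶ Y11}
    {v00 : X00 ⟶ Y00} {v01 : X01 ⟶ Y01} {v10 : X10 ⟶ Y10} {v11 : X11 ⟶ Y11},
    tf ≫ ti = tg ≫ tj →
    toPreJCat.IsHPO bf bg bi bj →
    toPreJCat.IsHPB tf v00 v01 bf →
    toPreJCat.IsHPB tg v00 v10 bg →
    toPreJCat.IsHPB ti v01 v11 bi →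
    toPreJCat.IsHPB tj v10 v11 bj →
    toPreJCat.IsHPO tf tg ti tj

variable {C}

/-- A modelization functor: preserves weak equivalences, homotopy pullbacks and
homotopy pushouts. -/
structure ModelizationFunctor {D : Type u'} [Category.{v'} D] [HasZeroObject D]
    [HasZeroMorphisms D] (P : PreJCat C) (Q : PreJCat D) where
  F : C ⥤ D
  map_weq : ∀ {X Y : C} (f : X ⟶ Y), P.weq f → Q.weq (F.map f)
  map_hpb : ∀ {Dd A Cc B : C} {f' : Dd ⟶ Cc} {g' : Dd ⟶ A} {g : Cc ⟶ B} {f : A ⟶ B},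
    P.IsHPB f' g' g f → Q.IsHPB (F.map f') (F.map g') (F.map g) (F.map f)
  map_hpo : ∀ {A B Cc Dd : C} {f : A ⟶ B} {g : A ⟶ Cc} {i' : B ⟶ Dd} {j' : Cc ⟶ Dd},
    P.IsHPO f g i' j' → Q.IsHPO (F.map f) (F.map g) (F.map i') (F.map j')

/-!
Starting from an `n`-th iterated join `h : *ⁿ_B E ⟶ B` of `p` and an e-fibrant replacement
`τ : B ⟶ F`, one builds by induction on `n` an `n`-th fat wedge `j : Tⁿ(p ≫ τ) ⟶ Fⁿ⁺¹` together
with a strict lift of `h ≫ τ ≫ Δ` along `j`. The inductive step compares the join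
`h * p` over `B` with the join `(Tⁿ × F) * (Fⁿ × E)` over `Fⁿ⁺¹`: the second join is built from
an F-factorization of `Fⁿ × E ⟶ Fⁿ × F` pulled back from one of `p ≫ τ`, which receives the
F-factorization used for `h * p`, so the universal properties of the pullbacks and pushouts
involved produce the comparison map. A weak section of `h` then turns
the strict lift into a weak lifting of `Δ` along `j`, using that every object is a cofibrant model.
-/

lemma isBinProd_of_isPullback_zero {X Y Pd : C} {p1 : Pd ⟶ X} {p2 : Pd ⟶ Y}
    (h : IsPullback p1 p2 (0 : X ⟶ 0) (0 : Y ⟶ 0)) : IsBinProd p1 p2 :=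
  ⟨isProductOfIsTerminalIsPullback _ _ p1 p2 (isZero_zero C).isTerminal h.isLimit⟩

/-- `𝟙 X × g : X × Z ⟶ X × Y` is a base change of `g`. -/
lemma isPullback_snd_of_isPullback_zero {X Y Z P Q : C} {π1 : P ⟶ X} {π2 : P ⟶ Y}
    (hP : IsPullback π1 π2 (0 : X ⟶ 0) (0 : Y ⟶ 0)) {ρ1 : Q ⟶ X} {ρ2 : Q ⟶ Z}
    (hQ : IsPullback ρ1 ρ2 (0 : X ⟶ 0) (0 : Z ⟶ 0)) (g : Z ⟶ Y) {m : Q ⟶ P}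
    (h1 : m ≫ π1 = ρ1) (h2 : m ≫ π2 = ρ2 ≫ g) : IsPullback m ρ2 π2 g :=
  IsPullback.of_right (by rwa [h1, comp_zero]) h2 hP

namespace PreJCat

lemma exists_weq_eFibrant (P : PreJCat C) (B : C) :
    ∃ (F : C) (τ : B ⟶ F), P.weq τ ∧ P.EFibrant F := by
  obtain ⟨F, τ, q, hτ, hq, -⟩ := P.F_fac (0 : B ⟶ 0)
  refine ⟨F, τ, hτ, ?_⟩
  rwa [EFibrant, (isZero_zero C).eq_of_tgt (0 : F ⟶ 0) q]

variable {P : PreJCat C}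

lemma EFibrant.of_fib {X Y : C} (hY : P.EFibrant Y) {f : X ⟶ Y}
    (hf : P.fib f) : P.EFibrant X := by
  simpa [EFibrant] using P.fib_comp hf hY

/-- Every base change of a fibration is a fibration, not only the one provided by (J2). -/
lemma fib_fst_of_isPullback {X Y Z W : C} {fst : W ⟶ X} {snd : W ⟶ Y} {f : X ⟶ Z}
    {g : Y ⟶ Z} (hpb : IsPullback fst snd f g) (hg : P.fib g) : P.fib fst := by
  obtain ⟨W', fst', snd', hpb', hsnd'⟩ := P.pb_exists g f hg
  rw [← IsPullback.isoIsPullback_hom_snd _ _ hpb.flip hpb']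
  exact P.fib_comp (P.iso_triv_fib _ inferInstance).1 hsnd'

lemma exists_fac_of_isPullback {C' B' Cb F M : C} {c : C' ⟶ Cb} {g : C' ⟶ B'}
    {k : Cb ⟶ F} {π : B' ⟶ F} (hpb : IsPullback c g k π) (hπ : P.fib π)
    {τk : Cb ⟶ M} {qk : M ⟶ F} (hτk : P.weq τk) (hqk : P.fib qk) (hfac : τk ≫ qk = k) :
    ∃ (Eg : C) (τg : C' ⟶ Eg) (qg : Eg ⟶ B') (m : Eg ⟶ M),
      P.weq τg ∧ P.fib qg ∧ τg ≫ qg = g ∧ IsPullback m qg qk π := by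
  obtain ⟨Eg, m, qg, hEg, hqg⟩ := P.pb_exists qk π hqk
  let τg : C' ⟶ Eg := hEg.lift (c ≫ τk) g (by rw [Category.assoc, hfac, hpb.w])
  have hτg : IsPullback τg c m τk := by
    refine IsPullback.of_right ?_ (hEg.lift_fst _ _ _) hEg.flip
    rw [hEg.lift_snd, hfac]
    exact hpb.flip
  exact ⟨Eg, τg, qg, m, (P.pb_weq (fib_fst_of_isPullback hEg hπ) hτg).1 hτk, hqg,
    hEg.lift_snd _ _ _, hEg⟩

/-- A join of `f` and `g` can be built so that its C-factorization extends a given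
cofibration `ip : D ⟶ Zp` mapping into the pullback of `f` and the F-factorization of `g`. -/
lemma exists_isJoin_under {A' C' B' Eg E'' D Zp : C} {f : A' ⟶ B'} {g : C' ⟶ B'}
    {τg : C' ⟶ Eg} {qg : Eg ⟶ B'} (hτg : P.weq τg) (hqg : P.fib qg) (hfac : τg ≫ qg = g)
    {fbar : E'' ⟶ Eg} {pbar : E'' ⟶ A'} (hpb : IsPullback fbar pbar qg f)
    {ip : D ⟶ Zp} (hip : P.cofib ip) {d : D ⟶ E''} {z : Zp ⟶ Eg} (hz : ip ≫ z = d ≫ fbar) :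
    ∃ (J : C) (j : J ⟶ B') (a : A' ⟶ J) (w : Zp ⟶ J), P.IsJoin f g j ∧
      a ≫ j = f ∧ w ≫ j = z ≫ qg ∧ ip ≫ w = d ≫ pbar ≫ a := by
  obtain ⟨Q, inlQ, inrQ, hpoQ, hinrQ⟩ := P.po_exists ip d hip
  obtain ⟨Z, i₂, σ, hi₂, hσ, hφ⟩ := P.C_fac (hpoQ.desc z fbar hz)
  have hiσ : (inrQ ≫ i₂) ≫ σ = fbar := by rw [Category.assoc, hφ, hpoQ.inr_desc]
  obtain ⟨J, inlJ, a, hpoJ, -⟩ := P.po_exists (inrQ ≫ i₂) pbar (P.cofib_comp hinrQ hi₂)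
  let j : J ⟶ B' := hpoJ.desc (σ ≫ qg) f (by rw [← Category.assoc, hiσ, hpb.w])
  refine ⟨J, j, a, inlQ ≫ i₂ ≫ inlJ,
    ⟨Eg, τg, qg, hτg, hqg, hfac, E'', Z, fbar, pbar, inrQ ≫ i₂, σ, a, inlJ, hpb,
      P.cofib_comp hinrQ hi₂, hσ, hiσ, hpoJ.flip, hpoJ.inr_desc _ _ _, hpoJ.inl_desc _ _ _⟩,
    hpoJ.inr_desc _ _ _, ?_, ?_⟩
  · rw [Category.assoc, Category.assoc, hpoJ.inl_desc, ← Category.assoc i₂, hφ,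
      hpoQ.inl_desc_assoc]
  · rw [← Category.assoc, hpoQ.w, Category.assoc, ← hpoJ.w]
    simp only [Category.assoc]

lemma exists_isJoin_comparison {X E B Y A' C' B' : C} {h : X ⟶ B} {p : E ⟶ B}
    {h' : Y ⟶ B} (hjoin : P.IsJoin h p h') {f : A' ⟶ B'} {g : C' ⟶ B'} (b : B ⟶ B')
    (u : X ⟶ A') (hu : u ≫ f = h ≫ b)
    (hg : ∀ {Ep : C} (τp : E ⟶ Ep) (qp : Ep ⟶ B), P.weq τp → P.fib qp → τp ≫ qp = p →
      ∃ (Eg : C) (τg : C' ⟶ Eg) (qg : Eg ⟶ B'), P.weq τg ∧ P.fib qg ∧ τg ≫ qg = g ∧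
        ∃ e : Ep ⟶ Eg, e ≫ qg = qp ≫ b) :
    ∃ (J : C) (j : J ⟶ B'), P.IsJoin f g j ∧ ∃ ℓ : Y ⟶ J, ℓ ≫ j = h' ≫ b := by
  obtain ⟨Ep, τp, qp, hτp, hqp, hfacp, D, Zp, fbarp, pbarp, ip, σp, ap, bp,
    hpbD, hip, -, hiσp, hpoY, hap, hbp⟩ := hjoin
  obtain ⟨Eg, τg, qg, hτg, hqg, hfacg, e, he⟩ := hg τp qp hτp hqp hfacp
  obtain ⟨E'', fbar, pbar, hpb, -⟩ := P.pb_exists qg f hqg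
  let d : D ⟶ E'' := hpb.lift (fbarp ≫ e) (pbarp ≫ u)
    (by rw [Category.assoc, he, hpbD.w_assoc, Category.assoc, hu])
  obtain ⟨J, j, a, w, hj, ha, hw, hipw⟩ := exists_isJoin_under hτg hqg hfacg hpb hip
    (d := d) (z := σp ≫ e) (by rw [reassoc_of% hiσp, hpb.lift_fst])
  refine ⟨J, j, hj, hpoY.desc (u ≫ a) w (by rw [hipw, hpb.lift_snd_assoc, Category.assoc]), ?_⟩
  refine hpoY.hom_ext ?_ ?_
  · rw [hpoY.inl_desc_assoc, Category.assoc, ha, hu, reassoc_of% hap]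
  · rw [hpoY.inr_desc_assoc, hw, Category.assoc, he, reassoc_of% hbp]

lemma exists_isFatWedge_succ {E B F : C} {p : E ⟶ B} {τ : B ⟶ F} (hF : P.EFibrant F)
    {n : ℕ} {T Pn : C} {j : T ⟶ Pn} {Δ : F ⟶ Pn} (hfw : P.IsFatWedge (p ≫ τ) n j Δ)
    (hPn : P.EFibrant Pn) {X Y : C} {h : X ⟶ B} {ℓ : X ⟶ T} (hℓ : ℓ ≫ j = h ≫ τ ≫ Δ)
    {h' : Y ⟶ B} (hjoin : P.IsJoin h p h') :
    ∃ (T' Pn' : C) (j' : T' ⟶ Pn') (Δ' : F ⟶ Pn'), P.IsFatWedge (p ≫ τ) (n + 1) j' Δ' ∧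
      P.EFibrant Pn' ∧ ∃ ℓ' : Y ⟶ T', ℓ' ≫ j' = h' ≫ τ ≫ Δ' := by
  obtain ⟨Pn1, pr1, pr2, hPn1, hpr2⟩ := P.pb_exists (0 : Pn ⟶ 0) (0 : F ⟶ 0) hPn
  obtain ⟨TB, q2, q1, hTB, -⟩ := P.pb_exists (0 : F ⟶ 0) (0 : T ⟶ 0) hF
  obtain ⟨PE, r1, r2, hPE, -⟩ := P.pb_exists (0 : Pn ⟶ 0) (0 : E ⟶ 0) hPn
  let jB : TB ⟶ Pn1 := hPn1.lift (q1 ≫ j) q2 (by simp)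
  let pP : PE ⟶ Pn1 := hPn1.lift r1 (r2 ≫ p ≫ τ) (by simp)
  let Δ' : F ⟶ Pn1 := hPn1.lift Δ (𝟙 F) (by simp)
  let u : X ⟶ TB := hTB.lift (h ≫ τ) ℓ (by simp)
  have hu : u ≫ jB = h ≫ τ ≫ Δ' := by
    refine hPn1.hom_ext ?_ ?_
    · simp only [jB, Δ', u, Category.assoc, IsPullback.lift_fst, IsPullback.lift_snd_assoc, hℓ]
    · simp only [jB, Δ', u, Category.assoc, IsPullback.lift_snd, IsPullback.lift_fst,
        Category.comp_id]
  have hpP : IsPullback r2 pP (p ≫ τ) pr2 :=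
    (isPullback_snd_of_isPullback_zero hPn1 hPE _ (hPn1.lift_fst _ _ _)
      (hPn1.lift_snd _ _ _)).flip
  obtain ⟨J, j', hjoin', ℓ', hℓ'⟩ := exists_isJoin_comparison hjoin (τ ≫ Δ') u hu
    (fun τp qp hτp hqp hfacp => by
      obtain ⟨M, τ₂, q₂, hτ₂, hq₂, hfac₂⟩ := P.F_fac (qp ≫ τ)
      obtain ⟨Eg, τg, qg, m, hτg, hqg, hfacg, hEg⟩ := exists_fac_of_isPullback hpP hpr2
        (P.weq_comp hτp hτ₂) hq₂ (by rw [Category.assoc, hfac₂, reassoc_of% hfacp])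
      refine ⟨Eg, τg, qg, hτg, hqg, hfacg, hEg.lift τ₂ (qp ≫ τ ≫ Δ') ?_, hEg.lift_snd _ _ _⟩
      simp only [hfac₂, Δ', Category.assoc, IsPullback.lift_snd, Category.comp_id])
  exact ⟨J, Pn1, j', Δ',
    .succ hfw (isBinProd_of_isPullback_zero hPn1) (isBinProd_of_isPullback_zero hTB.flip)
      (isBinProd_of_isPullback_zero hPE) ⟨hPn1.lift_fst _ _ _, hPn1.lift_snd _ _ _⟩
      ⟨hPn1.lift_fst _ _ _, hPn1.lift_snd _ _ _⟩ hjoin'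
      ⟨hPn1.lift_fst _ _ _, hPn1.lift_snd _ _ _⟩,
    hF.of_fib hpr2, ℓ', hℓ'⟩

lemma exists_isFatWedge_of_isIterJoin {E B F : C} (p : E ⟶ B) (τ : B ⟶ F)
    (hF : P.EFibrant F) {n : ℕ} {X : C} {h : X ⟶ B} (hiter : P.IsIterJoin p n h) :
    ∃ (T Pn : C) (j : T ⟶ Pn) (Δ : F ⟶ Pn), P.IsFatWedge (p ≫ τ) n j Δ ∧
      P.EFibrant Pn ∧ ∃ ℓ : X ⟶ T, ℓ ≫ j = h ≫ τ ≫ Δ := by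
  induction hiter with
  | zero => exact ⟨E, F, p ≫ τ, 𝟙 F, .zero, hF, 𝟙 E, by simp⟩
  | succ _ hjoin ih =>
    obtain ⟨T, Pn, j, Δ, hfw, hPn, ℓ, hℓ⟩ := ih
    exact exists_isFatWedge_succ hF hfw hPn hℓ hjoin

lemma exists_lift_of_weq {A A' Y Z : C} (hA' : P.CofModel A') {w : A ⟶ A'} (hw : P.weq w)
    {q : Y ⟶ Z} (hq : P.fib q) {m : A' ⟶ Z} {u : A ⟶ Y} (hu : u ≫ q = w ≫ m) :
    ∃ t : A' ⟶ Y, t ≫ q = m := by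
  obtain ⟨Pb, fb, pb, hpb, hpbfib⟩ := P.pb_exists q m hq
  obtain ⟨W, τ, q', hτ, hq', hfac⟩ := P.F_fac (hpb.lift u w hu)
  have hτq'pb : τ ≫ q' ≫ pb = w := by rw [← Category.assoc, hfac, hpb.lift_snd]
  obtain ⟨s, hs⟩ := hA' (q' ≫ pb) (P.fib_comp hq' hpbfib)
    (P.weq_of_comp_right hτ (hτq'pb ▸ hw))
  exact ⟨s ≫ q' ≫ fb, by simp only [Category.assoc, hpb.w, reassoc_of% hs]⟩

lemma weakLifting_of_fac {A B Cc : C} {f : A ⟶ B} {g : Cc ⟶ B} {ℓ : A ⟶ Cc}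
    (hℓ : ℓ ≫ g = f) : P.WeakLifting f g := by
  obtain ⟨Z, τ, q, hτ, hq, hfac⟩ := P.F_fac g
  exact ⟨Z, τ, q, hτ, hq, hfac, ℓ ≫ τ, by rw [Category.assoc, hfac, hℓ]⟩

lemma WeakLifting.precomp {A A' B Cc : C} {f : A ⟶ B} {g : Cc ⟶ B} (a : A' ⟶ A)
    (hf : P.WeakLifting f g) : P.WeakLifting (a ≫ f) g := by
  obtain ⟨Z, τ, q, hτ, hq, hfac, s, hs⟩ := hf
  exact ⟨Z, τ, q, hτ, hq, hfac, a ≫ s, by rw [Category.assoc, hs]⟩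

lemma WeakLifting.of_weq_comp {A A' B Cc : C} {w : A ⟶ A'} {m : A' ⟶ B} {g : Cc ⟶ B}
    (hA' : P.CofModel A') (hw : P.weq w) (hwm : P.WeakLifting (w ≫ m) g) :
    P.WeakLifting m g := by
  obtain ⟨Z, τ, q, hτ, hq, hfac, s, hs⟩ := hwm
  obtain ⟨t, ht⟩ := exists_lift_of_weq hA' hw hq hs
  exact ⟨Z, τ, q, hτ, hq, hfac, t, ht⟩

lemma HasWeakSection.weakLifting (hc : ∀ X : C, P.CofModel X) {X B A Cc : C}
    {h : X ⟶ B} (hh : P.HasWeakSection h) {m : B ⟶ A} {g : Cc ⟶ A}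
    (hhm : P.WeakLifting (h ≫ m) g) : P.WeakLifting m g := by
  obtain ⟨Eh, σ, q, hσ, -, hfac, s, hs⟩ := hh
  have hqm : P.WeakLifting (q ≫ m) g :=
    .of_weq_comp (hc Eh) hσ (by rwa [← Category.assoc, hfac])
  simpa [reassoc_of% hs] using hqm.precomp s

lemma Wsecat_le_WsecatE {E B F : C} (p : E ⟶ B) {τ : B ⟶ F} (hτ : P.weq τ)
    (hF : P.EFibrant F) : P.Wsecat p ≤ P.WsecatE (p ≫ τ) :=
  iInf_le_of_le F (iInf_le_of_le τ (iInf_le _ ⟨hτ, hF⟩))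

end PreJCat

/-- In a category satisfying (J1)-(J4) (but not necessarily the
cube axiom), `Wsecat p ≤ Gsecat p` for any morphism `p`. -/
theorem Wsecat_le_Gsecat (P : PreJCat C)
    (hc : ∀ X : C, P.CofModel X)
    {E B : C} (p : E ⟶ B) :
    P.Wsecat p ≤ P.Gsecat p := by
  refine le_sInf ?_
  rintro _ ⟨n, rfl, X, h, hiter, hsec⟩
  obtain ⟨F, τ, hτ, hF⟩ := P.exists_weq_eFibrant B
  obtain ⟨T, Pn, j, Δ, hfw, -, ℓ, hℓ⟩ := PreJCat.exists_isFatWedge_of_isIterJoin p τ hF hiter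
  have hlift : P.WeakLifting Δ j :=
    .of_weq_comp (hc F) hτ (hsec.weakLifting hc (PreJCat.weakLifting_of_fac hℓ))
  exact (PreJCat.Wsecat_le_WsecatE p hτ hF).trans (sInf_le ⟨n, rfl, T, Pn, j, Δ, hfw, hlift⟩)
end

section
/- In a J-category, let p : E → B, p' : E' → B', and b : B → B' be morphisms such that E-E'-B'-B forms a weak pullback. Then secat(p) ≤ min{cat(b), secat(p')}. -/
open CategoryTheory CategoryTheory.Limits ZeroObject

universe v u v' u'

variable (C : Type u) [Category.{v} C] [HasZeroObject C] [HasZeroMorphisms C]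

variable {C}

variable (C)

variable {C}

/-!
Replacing `p'` by a fibration `q`, the weak pullback hypothesis says that `p` is weakly equivalent
over `B` to the strict base change of `q` along `b`. This property passes to joins: the join of
`f'` and `g'` is modelled by a homotopy pushout square of fibrations over `B'`; its base change
along `b` is again a homotopy pushout by the cube axiom, and is weakly equivalent to the join of
the base changes. By induction the `n`-th join of `p` is, up to weak equivalence, the base change
of the `n`-th join of `p'`, so a weak lifting of `b` through the latter gives a weak section of
the former. Such a lifting comes from a weak section of the `n`-th join of `p'`, and also from a
weak lifting of `b` through the `n`-th Ganea map of `B'`, because joins are functorial and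
`0 ⟶ B'` factors through `p'`.
-/

namespace PreJCat

variable {C : Type u} [Category.{v} C] {P : PreJCat C}

lemma fib_snd_of_isPullback {Q X Y Z : C} {fst : Q ⟶ X} {snd : Q ⟶ Y} {f : X ⟶ Z}
    {g : Y ⟶ Z} (h : IsPullback fst snd f g) (hf : P.fib f) : P.fib snd := by
  obtain ⟨Q', fst', snd', h', hsnd'⟩ := P.pb_exists f g hf
  rw [← h.isoIsPullback_hom_snd _ _ h']
  exact P.fib_comp (P.iso_triv_fib _ inferInstance).1 hsnd'

lemma cofib_inr_of_isPushout {Z X Y Q : C} {f : Z ⟶ X} {g : Z ⟶ Y} {inl : X ⟶ Q}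
    {inr : Y ⟶ Q} (h : IsPushout f g inl inr) (hf : P.cofib f) : P.cofib inr := by
  obtain ⟨Q', inl', inr', h', hinr'⟩ := P.po_exists f g hf
  rw [← h'.inr_isoIsPushout_hom _ _ h]
  exact P.cofib_comp hinr' (P.iso_triv_cofib _ inferInstance).1

lemma weq_id (P : PreJCat C) (X : C) : P.weq (𝟙 X) := (P.iso_triv_fib (𝟙 X) inferInstance).2

/-- A form of the coglueing lemma. -/
lemma weq_of_isPullback_of_weq {P₁ P₂ X₁ Y₁ X₂ Y₂ S : C}
    {a₁ : P₁ ⟶ X₁} {b₁ : P₁ ⟶ Y₁} {f₁ : X₁ ⟶ S} {g₁ : Y₁ ⟶ S}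
    {a₂ : P₂ ⟶ X₂} {b₂ : P₂ ⟶ Y₂} {f₂ : X₂ ⟶ S} {g₂ : Y₂ ⟶ S}
    (h₁ : IsPullback a₁ b₁ f₁ g₁) (h₂ : IsPullback a₂ b₂ f₂ g₂) (hf₁ : P.fib f₁)
    (hg₂ : P.fib g₂) {x : X₁ ⟶ X₂} {y : Y₁ ⟶ Y₂} (hx : P.weq x) (hy : P.weq y)
    (hxf : x ≫ f₂ = f₁) (hyg : y ≫ g₂ = g₁) {v : P₁ ⟶ P₂}
    (hva : v ≫ a₂ = a₁ ≫ x) (hvb : v ≫ b₂ = b₁ ≫ y) : P.weq v := by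
  -- `v` factors through `X₁ ×_S Y₂` as a base change of `y` followed by one of `x`.
  obtain ⟨M, a, b, hM, hb⟩ := P.pb_exists f₁ g₂ hf₁
  have hu : a₁ ≫ f₁ = (b₁ ≫ y) ≫ g₂ := by rw [Category.assoc, hyg, h₁.w]
  have ht : (a ≫ x) ≫ f₂ = b ≫ g₂ := by rw [Category.assoc, hxf, hM.w]
  have hu_pb : IsPullback (hM.lift _ _ hu) b₁ b y := by
    refine IsPullback.of_right ?_ (hM.lift_snd _ _ hu) hM
    rw [hM.lift_fst, hyg]
    exact h₁
  have ht_pb : IsPullback (h₂.lift _ _ ht) a a₂ x :=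
    IsPullback.of_right (by rw [h₂.lift_snd, hxf]; exact hM.flip) (h₂.lift_fst _ _ _) h₂.flip
  have hv : v = hM.lift _ _ hu ≫ h₂.lift _ _ ht := by
    apply h₂.hom_ext
    · rw [hva, Category.assoc, h₂.lift_fst, ← Category.assoc, hM.lift_fst]
    · rw [hvb, Category.assoc, h₂.lift_snd, hM.lift_snd]
  rw [hv]
  exact P.weq_comp ((P.pb_weq hb hu_pb).1 hy)
    ((P.pb_weq (fib_snd_of_isPullback h₂.flip hg₂) ht_pb).1 hx)

lemma weq_of_isPullback_of_trivFib {PX PY X Y Z B : C} {fX : PX ⟶ X} {pX : PX ⟶ B}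
    {fY : PY ⟶ Y} {pY : PY ⟶ B} {m : X ⟶ Y} {q : Y ⟶ Z} {b : B ⟶ Z}
    (hX : IsPullback fX pX (m ≫ q) b) (hY : IsPullback fY pY q b) (hm : P.fib m)
    (hm' : P.weq m) {t : PX ⟶ PY} (ht₁ : t ≫ fY = fX ≫ m) (ht₂ : t ≫ pY = pX) : P.weq t :=
  (P.pb_weq hm (IsPullback.of_bot (by rwa [ht₂]) ht₁.symm hY)).2 hm'

lemma weq_of_isPushout_of_weq {D X Z Y X₂ Y₂ : C} {pbar : D ⟶ X} {i : D ⟶ Z} {a : X ⟶ Y}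
    {z : Z ⟶ Y} (hY : IsPushout pbar i a z) (hi : P.cofib i) {x : X ⟶ X₂} (hx : P.weq x)
    {a₂ : X₂ ⟶ Y₂} {z₂ : Z ⟶ Y₂} (hY₂ : IsPushout i (pbar ≫ x) z₂ a₂) {w : Y ⟶ Y₂}
    (hwa : a ≫ w = x ≫ a₂) (hwz : z ≫ w = z₂) : P.weq w :=
  (P.po_weq (cofib_inr_of_isPushout hY.flip hi)
    (IsPushout.of_top (by rwa [hwz]) hwa hY.flip)).1 hx

lemma CofModel.exists_lift_over {Z F F' S : C} {τ : Z ⟶ F} {q : F ⟶ S} {q' : F' ⟶ S}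
    {v : Z ⟶ F'} (hF : P.CofModel F) (hτ : P.weq τ) (hq' : P.fib q')
    (hcomm : τ ≫ q = v ≫ q') : ∃ ℓ : F ⟶ F', ℓ ≫ q' = q ∧ (P.weq v → P.weq ℓ) := by
  obtain ⟨W, fW, pW, hW, hpW⟩ := P.pb_exists q' q hq'
  -- Factor `(v, τ) : Z ⟶ F' ×_S F` as a weak equivalence followed by a fibration `γ`: then
  -- `γ ≫ pW` is a trivial fibration onto the cofibrant model `F`, so it has a section `t`.
  obtain ⟨Y, α, γ, hα, hγ, hαγ⟩ := P.F_fac (hW.lift v τ hcomm.symm)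
  have hαv : α ≫ γ ≫ fW = v := by rw [← Category.assoc, hαγ, hW.lift_fst]
  have hατ : α ≫ γ ≫ pW = τ := by rw [← Category.assoc, hαγ, hW.lift_snd]
  have hγW : P.weq (γ ≫ pW) := P.weq_of_comp_right hα (by rw [hατ]; exact hτ)
  obtain ⟨t, ht⟩ := hF (γ ≫ pW) (P.fib_comp hγ hpW) hγW
  refine ⟨t ≫ γ ≫ fW, ?_, fun hv => ?_⟩
  · rw [Category.assoc, Category.assoc, hW.w, ← Category.assoc γ, ← Category.assoc, ht,
      Category.id_comp]
  · have htw : P.weq t := P.weq_of_comp_left hγW (by rw [ht]; exact P.weq_id F)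
    exact P.weq_comp htw (P.weq_of_comp_right hα (by rw [hαv]; exact hv))

lemma HasWeakSection.weakLifting_s6 {A B X : C} {g : X ⟶ B} (hg : P.HasWeakSection g)
    (f : A ⟶ B) : P.WeakLifting f g := by
  obtain ⟨F, τ, q, hτ, hq, hτq, s, hs⟩ := hg
  exact ⟨F, τ, q, hτ, hq, hτq, f ≫ s, by rw [Category.assoc, hs, Category.comp_id]⟩

lemma WeakLifting.of_map (hc : ∀ X : C, P.CofModel X) {A B X₁ X₂ : C} {f : A ⟶ B}
    {h₁ : X₁ ⟶ B} {h₂ : X₂ ⟶ B} {m : X₁ ⟶ X₂} (hm : m ≫ h₂ = h₁)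
    (hf : P.WeakLifting f h₁) : P.WeakLifting f h₂ := by
  obtain ⟨E₁, τ₁, q₁, hτ₁, -, hτq₁, s, hs⟩ := hf
  obtain ⟨E₂, τ₂, q₂, hτ₂, hq₂, hτq₂⟩ := P.F_fac h₂
  obtain ⟨e, he, -⟩ := CofModel.exists_lift_over (hc E₁) hτ₁ hq₂
    (show τ₁ ≫ q₁ = (m ≫ τ₂) ≫ q₂ by rw [hτq₁, ← hm, Category.assoc, hτq₂])
  exact ⟨E₂, τ₂, q₂, hτ₂, hq₂, hτq₂, s ≫ e, by rw [Category.assoc, he, hs]⟩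

lemma exists_isJoin {A Cc B E D Z J : C} {f : A ⟶ B} {g : Cc ⟶ B} {τ : Cc ⟶ E} {q : E ⟶ B}
    (hτ : P.weq τ) (hq : P.fib q) (hτq : τ ≫ q = g) {fbar : D ⟶ E} {pbar : D ⟶ A}
    (hD : IsPullback fbar pbar q f) {i : D ⟶ Z} {σ : Z ⟶ E} (hi : P.cofib i)
    (hσ : P.weq σ) (hiσ : i ≫ σ = fbar) {a : A ⟶ J} {z : Z ⟶ J} (hJ : IsPushout pbar i a z) :
    ∃ j : J ⟶ B, P.IsJoin f g j ∧ a ≫ j = f ∧ z ≫ j = σ ≫ q := by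
  have hw : pbar ≫ f = i ≫ σ ≫ q := by rw [← Category.assoc, hiσ, hD.w]
  exact ⟨hJ.desc f (σ ≫ q) hw, ⟨E, τ, q, hτ, hq, hτq, D, Z, fbar, pbar, i, σ, a, z, hD, hi, hσ,
    hiσ, hJ, hJ.inl_desc _ _ _, hJ.inr_desc _ _ _⟩, hJ.inl_desc _ _ _, hJ.inr_desc _ _ _⟩

lemma IsJoin.exists_map (hc : ∀ X : C, P.CofModel X) {A₁ A₂ X₁ X₂ B J₁ : C}
    {g₁ : A₁ ⟶ B} {g₂ : A₂ ⟶ B} {ℓ : A₁ ⟶ A₂} (hℓ : ℓ ≫ g₂ = g₁)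
    {f₁ : X₁ ⟶ B} {f₂ : X₂ ⟶ B} {d : X₁ ⟶ X₂} (hd : d ≫ f₂ = f₁)
    {j₁ : J₁ ⟶ B} (hj : P.IsJoin f₁ g₁ j₁) :
    ∃ (J₂ : C) (j₂ : J₂ ⟶ B) (m : J₁ ⟶ J₂), P.IsJoin f₂ g₂ j₂ ∧ m ≫ j₂ = j₁ := by
  obtain ⟨E₁, τ₁, q₁, hτ₁, -, hτq₁, D₁, Z₁, fbar₁, pbar₁, i₁, σ₁, a₁, z₁,
    hD₁, hi₁, -, hiσ₁, hJ₁, ha₁, hz₁⟩ := hj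
  obtain ⟨E₂, τ₂, q₂, hτ₂, hq₂, hτq₂⟩ := P.F_fac g₂
  obtain ⟨e, he, -⟩ := CofModel.exists_lift_over (hc E₁) hτ₁ hq₂
    (show τ₁ ≫ q₁ = (ℓ ≫ τ₂) ≫ q₂ by rw [hτq₁, ← hℓ, Category.assoc, hτq₂])
  obtain ⟨D₂, fbar₂, pbar₂, hD₂, -⟩ := P.pb_exists q₂ f₂ hq₂
  have huc : (fbar₁ ≫ e) ≫ q₂ = (pbar₁ ≫ d) ≫ f₂ := by
    rw [Category.assoc, he, hD₁.w, Category.assoc, hd]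
  set u := hD₂.lift _ _ huc
  -- `Z₂` is obtained by factoring the map `Z₁ ⊔_{D₁} D₂ ⟶ E₂` through a cofibration.
  obtain ⟨Q, inlQ, inrQ, hQ, hinrQ⟩ := P.po_exists i₁ u hi₁
  have hφc : i₁ ≫ σ₁ ≫ e = u ≫ fbar₂ := by rw [← Category.assoc, hiσ₁, hD₂.lift_fst]
  obtain ⟨Z₂, i, σ, hi, hσ, hiσ⟩ := P.C_fac (hQ.desc (σ₁ ≫ e) fbar₂ hφc)
  obtain ⟨J₂, z₂, a₂, hJ₂, -⟩ := P.po_exists (inrQ ≫ i) pbar₂ (P.cofib_comp hinrQ hi)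
  obtain ⟨j₂, hj₂, ha₂, hz₂⟩ := exists_isJoin hτ₂ hq₂ hτq₂ hD₂ (P.cofib_comp hinrQ hi) hσ
    (by rw [Category.assoc, hiσ, hQ.inr_desc]) hJ₂.flip
  have hmc : pbar₁ ≫ d ≫ a₂ = i₁ ≫ inlQ ≫ i ≫ z₂ := by
    rw [← Category.assoc, ← hD₂.lift_snd _ _ huc, Category.assoc, ← hJ₂.w,
      ← Category.assoc u, ← Category.assoc u, ← hQ.w]
    simp only [Category.assoc]
  refine ⟨J₂, j₂, hJ₁.desc (d ≫ a₂) (inlQ ≫ i ≫ z₂) hmc, hj₂, ?_⟩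
  apply hJ₁.hom_ext
  · rw [hJ₁.inl_desc_assoc, Category.assoc, ha₂, hd, ha₁]
  · rw [hJ₁.inr_desc_assoc, Category.assoc, Category.assoc, hz₂, hz₁, ← Category.assoc i,
      hiσ, hQ.inl_desc_assoc, Category.assoc, he]

lemma IsIterJoin.exists_map (hc : ∀ X : C, P.CofModel X) {A₁ A₂ B : C} {g₁ : A₁ ⟶ B}
    {g₂ : A₂ ⟶ B} {ℓ : A₁ ⟶ A₂} (hℓ : ℓ ≫ g₂ = g₁) {n : ℕ} {X₁ : C} {h₁ : X₁ ⟶ B}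
    (hit : P.IsIterJoin g₁ n h₁) :
    ∃ (X₂ : C) (h₂ : X₂ ⟶ B) (m : X₁ ⟶ X₂), P.IsIterJoin g₂ n h₂ ∧ m ≫ h₂ = h₁ := by
  induction hit with
  | zero => exact ⟨A₂, g₂, ℓ, IsIterJoin.zero, hℓ⟩
  | succ _ hj ih =>
    obtain ⟨X₂, h₂, m, hit₂, hm⟩ := ih
    obtain ⟨J₂, j₂, m', hj₂, hm'⟩ := hj.exists_map hc hℓ hm
    exact ⟨J₂, j₂, m', hit₂.succ hj₂, hm'⟩

lemma IsHPB.precomp_weq {D' D A Cc B : C} {e : D' ⟶ D} {f' : D ⟶ Cc} {g' : D ⟶ A}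
    {g : Cc ⟶ B} {f : A ⟶ B} (h : P.IsHPB f' g' g f) (he : P.weq e) :
    P.IsHPB (e ≫ f') (e ≫ g') g f := by
  obtain ⟨hcomm, E, τ, q, hτ, hq, hτq, Pt, pr1, pr2, hPt, w, hw, hw1, hw2⟩ := h
  exact ⟨by rw [Category.assoc, hcomm, Category.assoc], E, τ, q, hτ, hq, hτq, Pt, pr1, pr2, hPt,
    e ≫ w, P.weq_comp he hw, by rw [Category.assoc, hw1, Category.assoc],
    by rw [Category.assoc, hw2]⟩

lemma IsHPB.shift_weq {D A Cc' Cc B : C} {x : D ⟶ Cc'} {y : Cc' ⟶ Cc} {g' : D ⟶ A}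
    {g : Cc ⟶ B} {f : A ⟶ B} (h : P.IsHPB (x ≫ y) g' g f) (hy : P.weq y) :
    P.IsHPB x g' (y ≫ g) f := by
  obtain ⟨hcomm, E, τ, q, hτ, hq, hτq, Pt, pr1, pr2, hPt, w, hw, hw1, hw2⟩ := h
  exact ⟨by rw [← Category.assoc, hcomm], E, y ≫ τ, q, P.weq_comp hy hτ, hq,
    by rw [Category.assoc, hτq], Pt, pr1, pr2, hPt, w, hw, by rw [hw1, Category.assoc], hw2⟩

lemma exists_isHPB_of_isPullback {B B' X Y PX PY : C} {b : B ⟶ B'} {qX : X ⟶ B'}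
    {qY : Y ⟶ B'} {m : X ⟶ Y} (hqX : P.fib qX) (hqY : P.fib qY) (hm : m ≫ qY = qX)
    {fX : PX ⟶ X} {pX : PX ⟶ B} {fY : PY ⟶ Y} {pY : PY ⟶ B}
    (hX : IsPullback fX pX qX b) (hY : IsPullback fY pY qY b) :
    ∃ t : PX ⟶ PY, t ≫ fY = fX ≫ m ∧ t ≫ pY = pX ∧ P.IsHPB t fX fY m := by
  have htc : (fX ≫ m) ≫ qY = pX ≫ b := by rw [Category.assoc, hm, hX.w]
  -- Base change along an F-factorization `βw ≫ βf` of `b` replaces `fY` by a fibration.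
  obtain ⟨B₁, βw, βf, hβw, hβf, hβ⟩ := P.F_fac b
  obtain ⟨Y₁, f₁, p₁, hY₁, -⟩ := P.pb_exists qY βf hqY
  have hf₁ : P.fib f₁ := fib_snd_of_isPullback hY₁.flip hβf
  have hτc : fY ≫ qY = (pY ≫ βw) ≫ βf := by rw [hY.w, ← hβ, Category.assoc]
  set τ := hY₁.lift fY (pY ≫ βw) hτc
  have hτ : P.weq τ := weq_of_isPullback_of_weq hY hY₁ hqY hβf (P.weq_id Y) hβw
    (Category.id_comp _) hβ (by rw [hY₁.lift_fst, Category.comp_id]) (hY₁.lift_snd _ _ _)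
  obtain ⟨Pt, pr1, pr2, hPt, -⟩ := P.pb_exists f₁ m hf₁
  have hPt' : IsPullback pr2 (pr1 ≫ p₁) qX βf := by
    have h := hPt.paste_horiz hY₁.flip
    rw [hm] at h
    exact h.flip
  set t := hY.lift _ _ htc
  have hwc : (t ≫ τ) ≫ f₁ = fX ≫ m := by rw [Category.assoc, hY₁.lift_fst, hY.lift_fst]
  have hw : P.weq (hPt.lift (t ≫ τ) fX hwc) := by
    refine weq_of_isPullback_of_weq hX hPt' hqX hβf (P.weq_id X) hβw (Category.id_comp _) hβ
      (by rw [hPt.lift_snd, Category.comp_id]) ?_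
    rw [← Category.assoc, hPt.lift_fst, Category.assoc, hY₁.lift_snd, ← Category.assoc,
      hY.lift_snd]
  exact ⟨t, hY.lift_fst _ _ _, hY.lift_snd _ _ _, hY.lift_fst _ _ _, Y₁, τ, f₁, hτ, hf₁,
    hY₁.lift_fst _ _ _, Pt, pr1, pr2, hPt, _, hw, hPt.lift_fst _ _ _, hPt.lift_snd _ _ _⟩

/-- Any homotopy pushout of the span `A ← D → Z` defining a join of `f` and `g` is weakly
equivalent to that join. -/
lemma exists_isJoin_of_isHPO {A Cc B E D Z W : C} {f : A ⟶ B} {g : Cc ⟶ B} {τ : Cc ⟶ E}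
    {q : E ⟶ B} (hτ : P.weq τ) (hq : P.fib q) (hτq : τ ≫ q = g) {fbar : D ⟶ E}
    {pbar : D ⟶ A} (hD : IsPullback fbar pbar q f) {t : D ⟶ Z} {e : Z ⟶ E} (he : P.weq e)
    (hte : t ≫ e = fbar) {ti : Z ⟶ W} {tj : A ⟶ W} (hpo : P.IsHPO t pbar ti tj) {s : W ⟶ B}
    (hti : ti ≫ s = e ≫ q) (htj : tj ≫ s = f) :
    ∃ (J : C) (j : J ⟶ B) (w : J ⟶ W), P.IsJoin f g j ∧ P.weq w ∧ w ≫ s = j := by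
  obtain ⟨-, Z', i, σ, hi, hσ, hiσ, Q, inl, inr, hQ, w, hw, hw₁, hw₂⟩ := hpo
  obtain ⟨j, hj, hinr, hinl⟩ := exists_isJoin hτ hq hτq hD hi (P.weq_comp hσ he)
    (by rw [← Category.assoc, hiσ, hte]) hQ.flip
  refine ⟨Q, j, w, hj, hw, hQ.hom_ext ?_ ?_⟩
  · rw [← Category.assoc, hw₁, hinl, Category.assoc, Category.assoc, hti]
  · rw [← Category.assoc, hw₂, htj, hinr]

/-- `k` is weakly equivalent, over `B`, to the strict pullback along `b` of a fibrant
replacement of `h`. -/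
def IsWeakBaseChange (P : PreJCat C) {K B W B' : C} (k : K ⟶ B) (h : W ⟶ B')
    (b : B ⟶ B') : Prop :=
  ∃ (F : C) (τ : W ⟶ F) (q : F ⟶ B'), P.weq τ ∧ P.fib q ∧ τ ≫ q = h ∧
    ∃ (Pt : C) (fst : Pt ⟶ F) (snd : Pt ⟶ B), IsPullback fst snd q b ∧
      ∃ w : K ⟶ Pt, P.weq w ∧ w ≫ snd = k

lemma IsWeakPullback.isWeakBaseChange {A B A' B' : C} {f : A ⟶ B} {f' : A' ⟶ B'}
    {b : B ⟶ B'} (h : P.IsWeakPullback f f' b) : P.IsWeakBaseChange f f' b := by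
  obtain ⟨_, τ, _, hτ, -, hτq, _, -, F, τ', q', hτ', hq', hτq', Pt, fst, snd, hPt, w, hw, -,
    hw₂⟩ := h
  exact ⟨F, τ ≫ τ', q', P.weq_comp hτ hτ', hq', by rw [Category.assoc, hτq', hτq], Pt, fst, snd,
    hPt, w, hw, hw₂⟩

lemma IsWeakBaseChange.hasWeakSection (hc : ∀ X : C, P.CofModel X) {K B W B' : C}
    {k : K ⟶ B} {h : W ⟶ B'} {b : B ⟶ B'} (hk : P.IsWeakBaseChange k h b)
    (hb : P.WeakLifting b h) : P.HasWeakSection k := by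
  obtain ⟨F, τ, q, -, hq, hτq, Pt, fst, snd, hPt, w, hw, hwk⟩ := hk
  obtain ⟨Fs, τs, qs, hτs, -, hτqs, s, hs⟩ := hb
  obtain ⟨ℓ, hℓ, -⟩ := CofModel.exists_lift_over (hc Fs) hτs hq
    (show τs ≫ qs = τ ≫ q by rw [hτqs, hτq])
  have hsc : (s ≫ ℓ) ≫ q = 𝟙 B ≫ b := by rw [Category.assoc, hℓ, hs, Category.id_comp]
  exact ⟨Pt, w, snd, hw, fib_snd_of_isPullback hPt hq, hwk, hPt.lift _ _ hsc,
    hPt.lift_snd _ _ _⟩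

/-- The join of `f'` and `g'` is weakly equivalent over `B'` to the pushout of a cofibrant
replacement of the span `Fg ← PF → Ff`, where `PF` is the pullback of fibrant replacements of
`g'` and `f'`. -/
lemma IsJoin.exists_pushout_model (hc : ∀ X : C, P.CofModel X) {X' A' Y B' Ff Fg PF : C}
    {f' : X' ⟶ B'} {g' : A' ⟶ B'} {j' : Y ⟶ B'} (hj : P.IsJoin f' g' j')
    {τf : X' ⟶ Ff} {qf : Ff ⟶ B'} (hτf : P.weq τf) (hqf : P.fib qf) (hτqf : τf ≫ qf = f')
    {τg : A' ⟶ Fg} {qg : Fg ⟶ B'} (hτg : P.weq τg) (hqg : P.fib qg) (hτqg : τg ≫ qg = g')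
    {α : PF ⟶ Fg} {β : PF ⟶ Ff} (hPF : IsPullback α β qg qf) :
    ∃ (QZ : C) (i : PF ⟶ QZ) (η : QZ ⟶ Fg) (R : C) (inl : QZ ⟶ R) (inr : Ff ⟶ R)
      (r : R ⟶ B') (w : Y ⟶ R), P.cofib i ∧ P.weq η ∧ i ≫ η = α ∧
      IsPushout i β inl inr ∧ inl ≫ r = η ≫ qg ∧ inr ≫ r = qf ∧ P.weq w ∧ w ≫ r = j' := by
  obtain ⟨Eg, τ', q', hτ', hq', hτq', D, Z, fbar, pbar, i', σ', a, z, hD, hi', hσ', hiσ', hY,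
    ha, hz⟩ := hj
  obtain ⟨ℓ, hℓ, hℓw⟩ := CofModel.exists_lift_over (hc Eg) hτ' hqg
    (show τ' ≫ q' = τg ≫ qg by rw [hτq', hτqg])
  have hvc : (fbar ≫ ℓ) ≫ qg = (pbar ≫ τf) ≫ qf := by
    rw [Category.assoc, hℓ, hD.w, Category.assoc, hτqf]
  have hv : P.weq (hPF.lift _ _ hvc) := weq_of_isPullback_of_weq hD hPF hq' hqf (hℓw hτg) hτf
    hℓ hτqf (hPF.lift_fst _ _ _) (hPF.lift_snd _ _ _)
  obtain ⟨QZ, inlZ, inrZ, hQZ, hinrZ⟩ := P.po_exists i' _ hi'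
  have hηc : i' ≫ σ' ≫ ℓ = hPF.lift _ _ hvc ≫ α := by
    rw [← Category.assoc, hiσ', hPF.lift_fst]
  have hη : P.weq (hQZ.desc _ _ hηc) := P.weq_of_comp_right ((P.po_weq hi' hQZ).1 hv)
    (by rw [hQZ.inl_desc]; exact P.weq_comp hσ' (hℓw hτg))
  obtain ⟨R, inl, inr, hR, -⟩ := P.po_exists inrZ β hinrZ
  have hrc : inrZ ≫ hQZ.desc _ _ hηc ≫ qg = β ≫ qf := by rw [hQZ.inr_desc_assoc, hPF.w]
  have hRY : IsPushout i' (pbar ≫ τf) (inlZ ≫ inl) inr := by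
    rw [← hPF.lift_snd _ _ hvc]
    exact hQZ.paste_vert hR
  have hwc : pbar ≫ τf ≫ inr = i' ≫ inlZ ≫ inl := by
    rw [← Category.assoc, hRY.w, Category.assoc]
  refine ⟨QZ, inrZ, _, R, inl, inr, hR.desc _ _ hrc, hY.desc _ _ hwc, hinrZ, hη,
    hQZ.inr_desc _ _ _, hR, hR.inl_desc _ _ _, hR.inr_desc _ _ _,
    weq_of_isPushout_of_weq hY hi' hτf hRY (hY.inl_desc _ _ _) (hY.inr_desc _ _ _), ?_⟩
  apply hY.hom_ext
  · rw [hY.inl_desc_assoc, Category.assoc, hR.inr_desc, hτqf, ha]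
  · rw [hY.inr_desc_assoc, Category.assoc, hR.inl_desc, hQZ.inl_desc_assoc, Category.assoc, hℓ,
      hz]

lemma exists_trivFib_factorization {Q E F S : C} {η : Q ⟶ E} {m : Q ⟶ F} {qE : E ⟶ S}
    {qF : F ⟶ S} (hη : P.weq η) (hqE : P.fib qE) (hqF : P.fib qF) (hm : m ≫ qF = η ≫ qE) :
    ∃ (Z : C) (θ : Q ⟶ Z) (e : Z ⟶ E) (n : Z ⟶ F), P.weq θ ∧ P.fib e ∧ P.weq e ∧
      θ ≫ e = η ∧ θ ≫ n = m ∧ e ≫ qE = n ≫ qF := by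
  obtain ⟨W, πE, πF, hW, -⟩ := P.pb_exists qE qF hqE
  obtain ⟨Z, θ, γ, hθ, hγ, hθγ⟩ := P.F_fac (hW.lift η m hm.symm)
  have hθe : θ ≫ γ ≫ πE = η := by rw [← Category.assoc, hθγ, hW.lift_fst]
  have hθn : θ ≫ γ ≫ πF = m := by rw [← Category.assoc, hθγ, hW.lift_snd]
  exact ⟨Z, θ, γ ≫ πE, γ ≫ πF, hθ, P.fib_comp hγ (fib_snd_of_isPullback hW.flip hqF),
    P.weq_of_comp_right hθ (by rw [hθe]; exact hη), hθe, hθn,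
    by rw [Category.assoc, Category.assoc, hW.w]⟩

/-- A homotopy pushout of a span of fibrations over `B'` whose left leg is a cofibration
followed by a weak equivalence can be realised by a square of fibrations over `B'`. -/
lemma exists_fibrant_isHPO {PF QZ Fg Ff R B' : C} {α : PF ⟶ Fg} {β : PF ⟶ Ff}
    {qg : Fg ⟶ B'} {qf : Ff ⟶ B'} (hqg : P.fib qg) {i : PF ⟶ QZ} {η : QZ ⟶ Fg}
    (hi : P.cofib i) (hη : P.weq η) (hiη : i ≫ η = α) {inl : QZ ⟶ R} {inr : Ff ⟶ R}
    (hR : IsPushout i β inl inr) {r : R ⟶ B'} (hr₁ : inl ≫ r = η ≫ qg) (hr₂ : inr ≫ r = qf) :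
    ∃ (FZ F₁ : C) (mi : PF ⟶ FZ) (mb : FZ ⟶ F₁) (ma : Ff ⟶ F₁) (e : FZ ⟶ Fg)
      (q₁ : F₁ ⟶ B') (ρ : R ⟶ F₁), P.IsHPO mi β mb ma ∧ P.fib q₁ ∧ P.fib e ∧ P.weq e ∧
      mi ≫ e = α ∧ e ≫ qg = mb ≫ q₁ ∧ ma ≫ q₁ = qf ∧ P.weq ρ ∧ ρ ≫ q₁ = r := by
  obtain ⟨F₁, ρ, q₁, hρ, hq₁, hρq₁⟩ := P.F_fac r
  obtain ⟨FZ, θ, e, mb, hθ, he, he', hθe, hθmb, heq⟩ := exists_trivFib_factorization hη hqg hq₁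
    (show (inl ≫ ρ) ≫ q₁ = η ≫ qg by rw [Category.assoc, hρq₁, hr₁])
  have hsq : (i ≫ θ) ≫ mb = β ≫ inr ≫ ρ := by
    rw [Category.assoc, hθmb, ← Category.assoc, hR.w, Category.assoc]
  exact ⟨FZ, F₁, i ≫ θ, mb, inr ≫ ρ, e, q₁, ρ,
    ⟨hsq, QZ, i, θ, hi, hθ, rfl, R, inl, inr, hR, ρ, hρ, hθmb.symm, rfl⟩, hq₁, he, he',
    by rw [Category.assoc, hθe, hiη], heq, by rw [Category.assoc, hρq₁, hr₂], hρ, hρq₁⟩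

/-- The corner `Ptg ×_B K` of the join upstairs maps by a weak equivalence to the base change
along `b` of `PF = Fg ×_{B'} Ff`. -/
lemma exists_weq_to_baseChange {B B' Fg Ff PF Ptg Ptf PtP K D : C} {b : B ⟶ B'}
    {qg : Fg ⟶ B'} {qf : Ff ⟶ B'} (hqg : P.fib qg) (hqf : P.fib qf) {α : PF ⟶ Fg}
    {β : PF ⟶ Ff} (hPF : IsPullback α β qg qf)
    {pg₁ : Ptg ⟶ Fg} {pg₂ : Ptg ⟶ B} (hPg : IsPullback pg₁ pg₂ qg b)
    {pf₁ : Ptf ⟶ Ff} {pf₂ : Ptf ⟶ B} (hPf : IsPullback pf₁ pf₂ qf b)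
    {fP : PtP ⟶ PF} {pP : PtP ⟶ B} (hPP : IsPullback fP pP (β ≫ qf) b)
    {tg : PtP ⟶ Ptf} (htg₁ : tg ≫ pf₁ = fP ≫ β) (htg₂ : tg ≫ pf₂ = pP)
    {f : K ⟶ B} {wf : K ⟶ Ptf} (hwf : P.weq wf) (hwff : wf ≫ pf₂ = f)
    {fbar : D ⟶ Ptg} {pbar : D ⟶ K} (hD : IsPullback fbar pbar pg₂ f) :
    ∃ d : D ⟶ PtP, P.weq d ∧ d ≫ tg = pbar ≫ wf ∧ d ≫ fP ≫ α = fbar ≫ pg₁ ∧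
      d ≫ pP = fbar ≫ pg₂ := by
  have hαc : (fP ≫ α) ≫ qg = pP ≫ b := by rw [Category.assoc, hPF.w, hPP.w]
  obtain ⟨tα, htα₁, htα₂⟩ : ∃ tα : PtP ⟶ Ptg, tα ≫ pg₁ = fP ≫ α ∧ tα ≫ pg₂ = pP :=
    ⟨hPg.lift _ _ hαc, hPg.lift_fst _ _ _, hPg.lift_snd _ _ _⟩
  -- `PtP` is the pullback `Ptg ×_B Ptf`.
  have hG : IsPullback tα tg pg₂ pf₂ := by
    have h := (IsPullback.of_bot (by rwa [htg₂]) htg₁.symm hPf).paste_horiz hPF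
    rw [hPf.w, ← htα₁] at h
    exact IsPullback.of_right h (by rw [htα₂, htg₂]) hPg
  have hdc : fbar ≫ pg₂ = (pbar ≫ wf) ≫ pf₂ := by rw [hD.w, Category.assoc, hwff]
  refine ⟨hG.lift _ _ hdc, weq_of_isPullback_of_weq hD hG (fib_snd_of_isPullback hPg hqg)
    (fib_snd_of_isPullback hPf hqf) (P.weq_id _) hwf (Category.id_comp _) hwff
    (by rw [hG.lift_fst, Category.comp_id]) (hG.lift_snd _ _ _), hG.lift_snd _ _ _, ?_, ?_⟩
  · rw [← htα₁, ← Category.assoc, hG.lift_fst]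
  · rw [← htα₂, ← Category.assoc, hG.lift_fst]

end PreJCat

namespace JCat

variable {C : Type u} [Category.{v} C]

open PreJCat

/-- Pulling back along `b` a homotopy pushout square of fibrations over `B'` that models the join
of `f'` and `g'`, the cube axiom yields a join of `f` and `g`. -/
lemma exists_isJoin_of_baseChange (J : JCat C) {B B' Ff Fg PF FZ F₁ : C} {b : B ⟶ B'}
    {qf : Ff ⟶ B'} {qg : Fg ⟶ B'} (hqf : J.fib qf) (hqg : J.fib qg) {α : PF ⟶ Fg}
    {β : PF ⟶ Ff} (hPF : IsPullback α β qg qf) {mi : PF ⟶ FZ} {mb : FZ ⟶ F₁} {ma : Ff ⟶ F₁}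
    {e : FZ ⟶ Fg} {q₁ : F₁ ⟶ B'} (hsq : J.IsHPO mi β mb ma) (hq₁ : J.fib q₁) (he : J.fib e)
    (he' : J.weq e) (hmie : mi ≫ e = α) (heq : e ≫ qg = mb ≫ q₁) (hmaq : ma ≫ q₁ = qf)
    {A Ptg : C} {g : A ⟶ B} {pg₁ : Ptg ⟶ Fg} {pg₂ : Ptg ⟶ B} (hPg : IsPullback pg₁ pg₂ qg b)
    {wg : A ⟶ Ptg} (hwg : J.weq wg) (hwgg : wg ≫ pg₂ = g)
    {K Ptf : C} {f : K ⟶ B} {pf₁ : Ptf ⟶ Ff} {pf₂ : Ptf ⟶ B} (hPf : IsPullback pf₁ pf₂ qf b)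
    {wf : K ⟶ Ptf} (hwf : J.weq wf) (hwff : wf ≫ pf₂ = f) :
    ∃ (Jo : C) (j : Jo ⟶ B), J.IsJoin f g j ∧ ∃ (Pt : C) (fst : Pt ⟶ F₁) (snd : Pt ⟶ B),
      IsPullback fst snd q₁ b ∧ ∃ w : Jo ⟶ Pt, J.weq w ∧ w ≫ snd = j := by
  have hβ : J.fib (β ≫ qf) := J.fib_comp (fib_snd_of_isPullback hPF hqg) hqf
  have hmb : J.fib (mb ≫ q₁) := heq ▸ J.fib_comp he hqg
  obtain ⟨PtP, fP, pP, hPP, -⟩ := J.pb_exists (β ≫ qf) b hβ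
  obtain ⟨PtZ, fZ, pZ, hPZ, -⟩ := J.pb_exists (mb ≫ q₁) b hmb
  obtain ⟨Pt₁, f₁, p₁, hP₁, -⟩ := J.pb_exists q₁ b hq₁
  obtain ⟨tf, htf₁, htf₂, hf⟩ := exists_isHPB_of_isPullback hβ hmb
    (by rw [← Category.assoc, hsq.1, Category.assoc, hmaq]) hPP hPZ
  obtain ⟨tg, htg₁, htg₂, hg⟩ := exists_isHPB_of_isPullback hβ hqf rfl hPP hPf
  obtain ⟨ti, hti₁, hti₂, hi⟩ := exists_isHPB_of_isPullback hmb hq₁ rfl hPZ hP₁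
  obtain ⟨tj, htj₁, htj₂, hj⟩ := exists_isHPB_of_isPullback hqf hq₁ hmaq hPf hP₁
  have htop : tf ≫ ti = tg ≫ tj := hP₁.hom_ext
    (by simp only [Category.assoc, hti₁, htj₁, reassoc_of% htf₁, reassoc_of% htg₁, hsq.1])
    (by simp only [Category.assoc, hti₂, htj₂, htf₂, htg₂])
  -- The top-left corner of the cube is the corner `D` of the join of `f` and `g`.
  obtain ⟨D, fbar, pbar, hD, -⟩ := J.pb_exists pg₂ f (fib_snd_of_isPullback hPg hqg)
  obtain ⟨d, hd, hdg, hdα, hdp⟩ :=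
    exists_weq_to_baseChange hqg hqf hPF hPg hPf hPP htg₁ htg₂ hwf hwff hD
  have hec : (fZ ≫ e) ≫ qg = pZ ≫ b := by rw [Category.assoc, heq, hPZ.w]
  have hε : J.weq (hPg.lift _ _ hec) := weq_of_isPullback_of_trivFib (heq ▸ hPZ) hPg he he'
    (hPg.lift_fst _ _ _) (hPg.lift_snd _ _ _)
  have hte : (d ≫ tf) ≫ hPg.lift _ _ hec = fbar := hPg.hom_ext
    (by simp only [Category.assoc, hPg.lift_fst, reassoc_of% htf₁, hmie, hdα])
    (by simp only [Category.assoc, hPg.lift_snd, htf₂, hdp])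
  have hcube : J.IsHPO (d ≫ tf) pbar ti (wf ≫ tj) := by
    refine J.cube (by rw [Category.assoc, htop, ← Category.assoc, hdg, Category.assoc])
      hsq (hf.precomp_weq hd) ?_ hi (hj.precomp_weq hwf)
    have hg' := hg.precomp_weq hd
    rw [hdg] at hg'
    exact hg'.shift_weq hwf
  obtain ⟨Jo, j, w, hJo, hw, hwj⟩ := exists_isJoin_of_isHPO hwg (fib_snd_of_isPullback hPg hqg)
    hwgg hD hε hte hcube (by rw [hti₂, hPg.lift_snd]) (by rw [Category.assoc, htj₂, hwff])
  exact ⟨Jo, j, hJo, Pt₁, f₁, p₁, hP₁, w, hw, hwj⟩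

lemma exists_isJoin_isWeakBaseChange (J : JCat C) (hc : ∀ X : C, J.CofModel X)
    {A B X A' X' B' Y : C} {b : B ⟶ B'} {f : X ⟶ B} {f' : X' ⟶ B'} {g : A ⟶ B}
    {g' : A' ⟶ B'} {j' : Y ⟶ B'} (hf : J.IsWeakBaseChange f f' b)
    (hg : J.IsWeakBaseChange g g' b) (hj : J.IsJoin f' g' j') :
    ∃ (Jo : C) (j : Jo ⟶ B), J.IsJoin f g j ∧ J.IsWeakBaseChange j j' b := by
  obtain ⟨Ff, τf, qf, hτf, hqf, hτqf, Ptf, pf₁, pf₂, hPf, wf, hwf, hwff⟩ := hf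
  obtain ⟨Fg, τg, qg, hτg, hqg, hτqg, Ptg, pg₁, pg₂, hPg, wg, hwg, hwgg⟩ := hg
  obtain ⟨PF, α, β, hPF, -⟩ := J.pb_exists qg qf hqg
  obtain ⟨QZ, i, η, R, inl, inr, r, w, hi, hη, hiη, hR, hr₁, hr₂, hw, hwr⟩ :=
    hj.exists_pushout_model hc hτf hqf hτqf hτg hqg hτqg hPF
  obtain ⟨FZ, F₁, mi, mb, ma, e, q₁, ρ, hsq, hq₁, he, he', hmie, heq, hmaq, hρ, hρq⟩ :=
    exists_fibrant_isHPO hqg hi hη hiη hR hr₁ hr₂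
  obtain ⟨Jo, j, hJo, Pt, fst, snd, hPt, w', hw', hw'j⟩ := J.exists_isJoin_of_baseChange hqf hqg
    hPF hsq hq₁ he he' hmie heq hmaq hPg hwg hwgg hPf hwf hwff
  exact ⟨Jo, j, hJo, F₁, w ≫ ρ, q₁, J.weq_comp hw hρ, hq₁, by rw [Category.assoc, hρq, hwr],
    Pt, fst, snd, hPt, w', hw', hw'j⟩

lemma exists_isIterJoin_isWeakBaseChange (J : JCat C) (hc : ∀ X : C, J.CofModel X)
    {E B E' B' : C} {p : E ⟶ B} {p' : E' ⟶ B'} {b : B ⟶ B'} (hp : J.IsWeakBaseChange p p' b)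
    {n : ℕ} {W : C} {h : W ⟶ B'} (hit : J.IsIterJoin p' n h) :
    ∃ (K : C) (k : K ⟶ B), J.IsIterJoin p n k ∧ J.IsWeakBaseChange k h b := by
  induction hit with
  | zero => exact ⟨E, p, .zero, hp⟩
  | succ _ hj ih =>
    obtain ⟨K, k, hk, hkb⟩ := ih
    obtain ⟨Jo, j, hJo, hjb⟩ := J.exists_isJoin_isWeakBaseChange hc hkb hp hj
    exact ⟨Jo, j, hk.succ hJo, hjb⟩

lemma Gsecat_le_of_weakLifting (J : JCat C) (hc : ∀ X : C, J.CofModel X) {E B E' B' : C}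
    {p : E ⟶ B} {p' : E' ⟶ B'} {b : B ⟶ B'} (hw : J.IsWeakPullback p p' b) {n : ℕ} {W : C}
    {h : W ⟶ B'} (hit : J.IsIterJoin p' n h) (hb : J.WeakLifting b h) : J.Gsecat p ≤ n := by
  obtain ⟨K, k, hk, hkb⟩ := J.exists_isIterJoin_isWeakBaseChange hc hw.isWeakBaseChange hit
  exact sInf_le ⟨n, rfl, K, k, hk, hkb.hasWeakSection hc hb⟩

end JCat

/-- In a J-category, if `E-E'-B'-B` is a weak pullback then
`secat p ≤ min (cat b) (secat p')`. -/
theorem Gsecat_le_min_of_weakPullback (J : JCat C)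
    (hc : ∀ X : C, J.toPreJCat.CofModel X)
    {E B E' B' : C} (p : E ⟶ B) (p' : E' ⟶ B') (b : B ⟶ B')
    (hw : J.toPreJCat.IsWeakPullback p p' b) :
    J.toPreJCat.Gsecat p ≤ min (J.toPreJCat.catMor b) (J.toPreJCat.Gsecat p') := by
  refine le_min (le_sInf ?_) (le_sInf ?_)
  · rintro _ ⟨n, rfl, G, g, hg, hb⟩
    obtain ⟨X, h, m, hit, hm⟩ := PreJCat.IsIterJoin.exists_map hc (zero_comp (f := p')) hg
    exact J.Gsecat_le_of_weakLifting hc hw hit (hb.of_map hc hm)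
  · rintro _ ⟨n, rfl, X, h, hit, hs⟩
    exact J.Gsecat_le_of_weakLifting hc hw hit (hs.weakLifting_s6 b)
end
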